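/- The number of sibling portraits of an n-gon inside a round gap of degree i, in which every polygon of the portrait maps one-to-one, equals the Fuss–Catalan number binomial(n·i, i)/((n−1)·i + 1). -/

import Mathlib

/-- Cyclic displacement (number of steps counterclockwise) from `a` to `x` among
`m` marked points on the circle. -/
def arcPos {m : ℕ} (a x : Fin m) : ℕ := (x.val + m - a.val) % m

/-- `t` lies strictly between `p` and `q` in counterclockwise cyclic order. -/
def CycBtw {m : ℕ} (p t q : Fin m) : Prop := 0 < arcPos p t ∧ arcPos p t < arcPos p q

/-- `q` is the next vertex of `S` counterclockwise after `p`. -/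
def IsNext {m : ℕ} (S : Finset (Fin m)) (p q : Fin m) : Prop :=
  p ∈ S ∧ q ∈ S ∧ p ≠ q ∧ ∀ r ∈ S, ¬ CycBtw p r q

/-- The label of a marked point: the points are cyclically labeled by repetitions
of the word `x_0 x_1 … x_{n-1}`. -/
def label (n : ℕ) {m : ℕ} (p : Fin m) : ZMod n := (p.val : ZMod n)

/-- `S` is a polygon visiting the labels in positive (counterclockwise) cyclic
order, i.e. its boundary maps forward as a positively oriented covering of the
boundary of the `n`-gon. -/
def IsPosPolygon (n : ℕ) {m : ℕ} (S : Finset (Fin m)) : Prop :=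
  2 ≤ S.card ∧ n ∣ S.card ∧ ∀ p q, IsNext S p q → label n q = label n p + 1

/-- Two vertex sets cross (link) on the circle. -/
def Crosses {m : ℕ} (S T : Finset (Fin m)) : Prop :=
  ∃ p ∈ S, ∃ q ∈ S, ∃ r ∈ T, ∃ s ∈ T, CycBtw p r q ∧ CycBtw q s p

/-- A sibling portrait of the `n`-gon in a round gap of degree `D`: a collection of
pairwise disjoint, non-crossing, positively oriented polygons using all `D*n`
preimage points (so that together `D` sides map to each side of the `n`-gon). -/
def IsPortrait (D n : ℕ) (PP : Finset (Finset (Fin (D * n)))) : Prop :=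
  (∀ S ∈ PP, IsPosPolygon n S) ∧
  (∀ S ∈ PP, ∀ T ∈ PP, S ≠ T → Disjoint S T ∧ ¬ Crosses S T) ∧
  (∀ p : Fin (D * n), ∃ S ∈ PP, p ∈ S)

open Finset

/-!
A portrait all of whose polygons are `n`-gons is the same thing as a noncrossing partition of the
`i * n` points into blocks of size `n`: the orientation condition comes for free, because the open
arc between two consecutive vertices of a block is a union of other blocks, so it has a multiple
of `n` points. Cutting the circle open, such a partition is determined by its set `M` of block
minima: the block with the largest minimum `a` consists of the `n` first points from `a` on, and
removing it leaves a smaller partition. The sets of minima that occur are exactly the `i`-sets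
satisfying the ballot condition that the first `t` points contain at least `t / n` elements of
`M`. After adding one more point, the cycle lemma shows that each of the `C(i*n+1, i)` subsets of
size `i` of the `i * n + 1` points of a circle has exactly one rotation satisfying the ballot
condition, which leaves `C(i*n+1, i) / (i*n+1) = C(n*i, i) / ((n-1)*i + 1)` ballot sets.
-/

section NoncrossingPartition

variable {α : Type*} [LinearOrder α] {n : ℕ} {G M A S T : Finset α} {P Q : Finset (Finset α)}
  {a : α}

def Interleaves (S T : Finset α) : Prop :=
  ∃ a ∈ S, ∃ b ∈ T, ∃ c ∈ S, ∃ d ∈ T, a < b ∧ b < c ∧ c < d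

def IsConsecutiveIn (S G : Finset α) : Prop :=
  ∀ x ∈ S, ∀ z ∈ S, ∀ y ∈ G, x < y → y < z → y ∈ S

lemma exists_subset_card_eq_forall_lt {s : Finset α} {k : ℕ} (hk : k ≤ #s) :
    ∃ t ⊆ s, #t = k ∧ ∀ x ∈ t, ∀ y ∈ s \ t, x < y := by
  induction k with
  | zero => exact ⟨∅, empty_subset s, card_empty, by simp⟩
  | succ k ih =>
    obtain ⟨t, hts, htk, hlt⟩ := ih (by omega)
    have hne : (s \ t).Nonempty := by
      rw [← card_pos, card_sdiff_of_subset hts]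
      omega
    have hb := min'_mem _ hne
    refine ⟨insert ((s \ t).min' hne) t, insert_subset (mem_sdiff.1 hb).1 hts, ?_, ?_⟩
    · rw [card_insert_of_notMem (mem_sdiff.1 hb).2, htk]
    · intro x hx y hy
      rw [mem_sdiff, mem_insert, not_or] at hy
      rcases mem_insert.1 hx with rfl | hx
      · exact lt_of_le_of_ne (min'_le _ _ (mem_sdiff.2 ⟨hy.1, hy.2.2⟩)) (Ne.symm hy.2.1)
      · exact hlt x hx y (mem_sdiff.2 ⟨hy.1, hy.2.2⟩)

lemma IsConsecutiveIn.mem_of_isLeast (hT : IsConsecutiveIn T G) (ha : IsLeast (T : Set α) a)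
    {x y : α} (hx : x ∈ G) (hax : a ≤ x) (hy : y ∈ T) (hxy : x < y) : x ∈ T := by
  rcases hax.eq_or_lt with rfl | hax
  exacts [ha.1, hT a ha.1 y hy x hx hax hxy]

lemma IsConsecutiveIn.eq_of_isLeast (hS : IsConsecutiveIn S G) (hT : IsConsecutiveIn T G)
    (hSG : S ⊆ G) (hTG : T ⊆ G) (haS : IsLeast (S : Set α) a) (haT : IsLeast (T : Set α) a)
    (hcard : #S = #T) : S = T := by
  by_contra hne
  obtain ⟨x, hxS, hxT⟩ := not_subset.1 fun h => hne (eq_of_subset_of_card_le h hcard.ge)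
  obtain ⟨y, hyT, hyS⟩ := not_subset.1 fun h => hne (eq_of_subset_of_card_le h hcard.le).symm
  rcases lt_or_gt_of_ne (fun h : x = y => hxT (h ▸ hyT)) with hxy | hyx
  · exact hxT (hT.mem_of_isLeast haT (hSG hxS) (haS.2 hxS) hyT hxy)
  · exact hyS (hS.mem_of_isLeast haS (hTG hyT) (haT.2 hyT) hxS hyx)

lemma IsConsecutiveIn.not_interleaves (hS : IsConsecutiveIn S G) (hTG : T ⊆ G \ S) :
    ¬ Interleaves S T ∧ ¬ Interleaves T S := by
  have hT : ∀ y ∈ T, y ∈ G ∧ y ∉ S := fun y hy => mem_sdiff.1 (hTG hy)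
  constructor
  · rintro ⟨a, ha, b, hb, c, hc, -, -, hab, hbc, -⟩
    exact (hT b hb).2 (hS a ha c hc b (hT b hb).1 hab hbc)
  · rintro ⟨-, -, b, hb, c, hc, d, hd, -, hbc, hcd⟩
    exact (hT c hc).2 (hS b hb d hd c (hT c hc).1 hbc hcd)

structure IsNoncrossingPartition (n : ℕ) (G : Finset α) (P : Finset (Finset α)) : Prop where
  card_eq : ∀ S ∈ P, #S = n
  pairwiseDisjoint : (P : Set (Finset α)).PairwiseDisjoint id
  noncrossing : (P : Set (Finset α)).Pairwise fun S T => ¬ Interleaves S T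
  biUnion_eq : P.biUnion id = G

lemma isNoncrossingPartition_empty : IsNoncrossingPartition n ∅ (∅ : Finset (Finset α)) :=
  ⟨by simp, by simp, by simp, by simp⟩

namespace IsNoncrossingPartition

lemma mem_iff (hP : IsNoncrossingPartition n G P) {x : α} : x ∈ G ↔ ∃ S ∈ P, x ∈ S := by
  simp [← hP.biUnion_eq]

lemma subset (hP : IsNoncrossingPartition n G P) (hS : S ∈ P) : S ⊆ G :=
  fun _ hx => hP.mem_iff.2 ⟨S, hS, hx⟩

lemma nonempty (hP : IsNoncrossingPartition n G P) (hn : 0 < n) (hS : S ∈ P) : S.Nonempty :=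
  card_pos.1 (hP.card_eq S hS ▸ hn)

lemma card_biUnion_of_subset (hP : IsNoncrossingPartition n G P) (hQ : Q ⊆ P) :
    #(Q.biUnion id) = n * #Q := by
  rw [card_biUnion (hP.pairwiseDisjoint.subset (coe_subset.2 hQ)), mul_comm]
  exact sum_const_nat fun S hS => hP.card_eq S (hQ hS)

lemma dvd_card (hP : IsNoncrossingPartition n G P) (hAG : A ⊆ G)
    (hA : ∀ S ∈ P, ∀ x ∈ S, x ∈ A → S ⊆ A) : n ∣ #A := by
  have hAeq : A = {S ∈ P | S ⊆ A}.biUnion id := by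
    ext x
    simp only [mem_biUnion, mem_filter, id]
    refine ⟨fun hx => ?_, fun ⟨S, ⟨_, hSA⟩, hx⟩ => hSA hx⟩
    obtain ⟨S, hS, hxS⟩ := hP.mem_iff.1 (hAG hx)
    exact ⟨S, ⟨hS, hA S hS x hxS hx⟩, hxS⟩
  rw [hAeq, hP.card_biUnion_of_subset (filter_subset _ _)]
  exact dvd_mul_right n _

lemma card (hP : IsNoncrossingPartition n G P) : #G = n * #P := by
  rw [← hP.card_biUnion_of_subset subset_rfl, hP.biUnion_eq]

lemma erase (hP : IsNoncrossingPartition n G P) (hS : S ∈ P) :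
    IsNoncrossingPartition n (G \ S) (P.erase S) where
  card_eq T hT := hP.card_eq T (mem_of_mem_erase hT)
  pairwiseDisjoint := hP.pairwiseDisjoint.subset (by simp)
  noncrossing := hP.noncrossing.mono (by simp)
  biUnion_eq := by
    ext x
    simp only [mem_biUnion, mem_erase, id, mem_sdiff, hP.mem_iff]
    constructor
    · rintro ⟨T, ⟨hTS, hT⟩, hx⟩
      exact ⟨⟨T, hT, hx⟩, disjoint_left.1 (hP.pairwiseDisjoint hT hS hTS) hx⟩
    · rintro ⟨⟨T, hT, hx⟩, hxS⟩
      exact ⟨T, ⟨fun h => hxS (h ▸ hx), hT⟩, hx⟩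

lemma insert (hP : IsNoncrossingPartition n (G \ S) P) (hSG : S ⊆ G) (hSn : #S = n)
    (hS : IsConsecutiveIn S G) : IsNoncrossingPartition n G (insert S P) where
  card_eq T hT := by
    rcases mem_insert.1 hT with rfl | hT
    exacts [hSn, hP.card_eq T hT]
  pairwiseDisjoint := by
    rw [coe_insert]
    refine hP.pairwiseDisjoint.insert fun T hT _ => ?_
    exact disjoint_left.2 fun x hxS hxT => (mem_sdiff.1 (hP.subset hT hxT)).2 hxS
  noncrossing := by
    rw [coe_insert]
    exact hP.noncrossing.insert fun T hT _ => hS.not_interleaves (hP.subset hT)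
  biUnion_eq := by
    rw [biUnion_insert, hP.biUnion_eq, id, union_sdiff_of_subset hSG]

end IsNoncrossingPartition

def blockMins (P : Finset (Finset α)) : Finset α :=
  P.biUnion fun S => {x ∈ S | ∀ y ∈ S, x ≤ y}

lemma mem_blockMins : a ∈ blockMins P ↔ ∃ S ∈ P, IsLeast (S : Set α) a := by
  simp only [blockMins, mem_biUnion, mem_filter]
  rfl

lemma filter_forall_le_eq_singleton (ha : IsLeast (S : Set α) a) :
    {x ∈ S | ∀ y ∈ S, x ≤ y} = {a} := by
  ext x
  rw [mem_filter, mem_singleton]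
  exact ⟨fun hx => IsLeast.unique hx ha, fun hx => hx ▸ ha⟩

lemma blockMins_insert (ha : IsLeast (S : Set α) a) :
    blockMins (insert S P) = insert a (blockMins P) := by
  rw [blockMins, biUnion_insert, filter_forall_le_eq_singleton ha, insert_eq]
  rfl

lemma card_blockMins (hne : ∀ S ∈ P, S.Nonempty)
    (hdisj : (P : Set (Finset α)).PairwiseDisjoint id) : #(blockMins P) = #P := by
  rw [blockMins, card_biUnion (hdisj.mono fun S => filter_subset _ S)]
  refine (sum_const_nat fun S hS => ?_).trans (mul_one _)
  rw [filter_forall_le_eq_singleton (isLeast_min' S (hne S hS)), card_singleton]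

lemma filter_blockMins_le (g : α) :
    {x ∈ blockMins P | x ≤ g} = blockMins {S ∈ P | ∃ x ∈ S, x ≤ g} := by
  ext x
  simp only [mem_filter, mem_blockMins]
  constructor
  · rintro ⟨⟨S, hS, hx⟩, hxg⟩
    exact ⟨S, ⟨hS, x, hx.1, hxg⟩, hx⟩
  · rintro ⟨S, ⟨hS, y, hy, hyg⟩, hx⟩
    exact ⟨⟨S, hS, hx⟩, (hx.2 hy).trans hyg⟩

def IsBallot (n : ℕ) (G M : Finset α) : Prop :=
  M ⊆ G ∧ ∀ g ∈ G, #{x ∈ G | x ≤ g} ≤ n * #{x ∈ M | x ≤ g}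

namespace IsNoncrossingPartition

lemma card_blockMins (hP : IsNoncrossingPartition n G P) (hn : 0 < n) :
    #(blockMins P) = #P :=
  _root_.card_blockMins (fun _ hS => hP.nonempty hn hS) hP.pairwiseDisjoint

lemma isBallot_blockMins (hP : IsNoncrossingPartition n G P) (hn : 0 < n) :
    IsBallot n G (blockMins P) := by
  refine ⟨fun x hx => ?_, fun g _ => ?_⟩
  · obtain ⟨S, hS, hx⟩ := mem_blockMins.1 hx
    exact hP.subset hS hx.1
  set Pg := {S ∈ P | ∃ x ∈ S, x ≤ g}
  have hPg : Pg ⊆ P := filter_subset _ _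
  have hcover : {x ∈ G | x ≤ g} ⊆ Pg.biUnion id := by
    intro x hx
    rw [mem_filter, hP.mem_iff] at hx
    obtain ⟨⟨S, hS, hxS⟩, hxg⟩ := hx
    exact mem_biUnion.2 ⟨S, mem_filter.2 ⟨hS, x, hxS, hxg⟩, hxS⟩
  calc #{x ∈ G | x ≤ g} ≤ #(Pg.biUnion id) := card_le_card hcover
    _ = n * #Pg := hP.card_biUnion_of_subset hPg
    _ = n * #{x ∈ blockMins P | x ≤ g} := by
      rw [filter_blockMins_le, _root_.card_blockMins (fun _ hS => hP.nonempty hn (hPg hS))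
        (hP.pairwiseDisjoint.subset (coe_subset.2 hPg))]

/-- A point of another block `T` between two points of `S` would make `T`, which starts
before `S`, interleave `S`. -/
lemma isConsecutiveIn_of_forall_blockMins_le (hP : IsNoncrossingPartition n G P)
    (hS : S ∈ P) (ha : IsLeast (S : Set α) a) (hmax : ∀ b ∈ blockMins P, b ≤ a) :
    IsConsecutiveIn S G := by
  intro x hx z hz y hy hxy hyz
  by_contra hyS
  obtain ⟨T, hT, hyT⟩ := hP.mem_iff.1 hy
  have hTS : T ≠ S := fun h => hyS (h ▸ hyT)
  have hbT := isLeast_min' T ⟨y, hyT⟩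
  have hba : T.min' ⟨y, hyT⟩ < a := by
    refine (hmax _ (mem_blockMins.2 ⟨T, hT, hbT⟩)).lt_of_ne fun h => ?_
    exact disjoint_left.1 (hP.pairwiseDisjoint hT hS hTS) hbT.1 (h ▸ ha.1)
  exact hP.noncrossing hT hS hTS
    ⟨_, hbT.1, x, hx, y, hyT, z, hz, hba.trans_le (ha.2 hx), hxy, hyz⟩

lemma blockMins_erase (hP : IsNoncrossingPartition n G P) (hS : S ∈ P)
    (ha : IsLeast (S : Set α) a) : blockMins (P.erase S) = (blockMins P).erase a := by
  have haP : a ∉ blockMins (P.erase S) := by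
    rw [mem_blockMins]
    rintro ⟨T, hT, haT⟩
    exact disjoint_left.1 (hP.pairwiseDisjoint (mem_of_mem_erase hT) hS (ne_of_mem_erase hT))
      haT.1 ha.1
  conv_rhs => rw [← insert_erase hS, blockMins_insert ha]
  exact (erase_insert haP).symm

theorem eq_of_blockMins_eq (hn : 0 < n) (hP : IsNoncrossingPartition n G P)
    (hQ : IsNoncrossingPartition n G Q) (h : blockMins P = blockMins Q) : P = Q := by
  induction G using Finset.strongInduction generalizing P Q with
  | H G ih =>
  rcases (blockMins P).eq_empty_or_nonempty with hE | hne
  · have hP0 : P = ∅ := card_eq_zero.1 (by rw [← hP.card_blockMins hn, hE, card_empty])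
    have hQ0 : Q = ∅ := card_eq_zero.1 (by rw [← hQ.card_blockMins hn, ← h, hE, card_empty])
    rw [hP0, hQ0]
  · obtain ⟨a, haP, hmax⟩ : ∃ a ∈ blockMins P, ∀ b ∈ blockMins P, b ≤ a :=
      ⟨_, max'_mem _ hne, le_max' _⟩
    obtain ⟨S, hS, haS⟩ := mem_blockMins.1 haP
    obtain ⟨T, hT, haT⟩ := mem_blockMins.1 (h ▸ haP)
    have hSc := hP.isConsecutiveIn_of_forall_blockMins_le hS haS hmax
    have hTc := hQ.isConsecutiveIn_of_forall_blockMins_le hT haT (h ▸ hmax)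
    have hST : S = T := hSc.eq_of_isLeast hTc (hP.subset hS) (hQ.subset hT) haS haT
      (by rw [hP.card_eq S hS, hQ.card_eq T hT])
    subst hST
    have herase : P.erase S = Q.erase S :=
      ih _ (sdiff_ssubset (hP.subset hS) (hP.nonempty hn hS)) (hP.erase hS) (hQ.erase hT)
        (by rw [hP.blockMins_erase hS haS, hQ.blockMins_erase hT haT, h])
    rw [← insert_erase hS, ← insert_erase hT, herase]

end IsNoncrossingPartition

namespace IsBallot

lemma le_card_filter_ge (hM : IsBallot n G M) (ha : IsGreatest (M : Set α) a)
    (hcard : #G = n * #M) : n ≤ #{x ∈ G | a ≤ x} := by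
  have hlow : #{x ∈ G | x < a} ≤ n * (#M - 1) := by
    rcases {x ∈ G | x < a}.eq_empty_or_nonempty with hE | hne
    · simp [hE]
    obtain ⟨g, hg, hgmax⟩ : ∃ g ∈ {x ∈ G | x < a}, ∀ x ∈ {x ∈ G | x < a}, x ≤ g :=
      ⟨_, max'_mem _ hne, le_max' _⟩
    have hga := (mem_filter.1 hg).2
    have hGg : {x ∈ G | x ≤ g} = {x ∈ G | x < a} := by
      ext x
      simp only [mem_filter]
      exact ⟨fun h => ⟨h.1, h.2.trans_lt hga⟩, fun h => ⟨h.1, hgmax x (mem_filter.2 h)⟩⟩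
    have hMg : {x ∈ M | x ≤ g} ⊆ M.erase a := fun x hx =>
      mem_erase.2 ⟨fun h => (h ▸ (mem_filter.1 hx).2).not_gt hga, (mem_filter.1 hx).1⟩
    calc #{x ∈ G | x < a} = #{x ∈ G | x ≤ g} := by rw [hGg]
      _ ≤ n * #{x ∈ M | x ≤ g} := hM.2 g (mem_filter.1 hg).1
      _ ≤ n * (#M - 1) := by
        gcongr
        exact (card_le_card hMg).trans_eq (card_erase_of_mem ha.1)
  have hsplit := card_filter_add_card_filter_not (s := G) (· < a)
  simp only [not_lt] at hsplit
  have hM1 : 1 ≤ #M := card_pos.2 ⟨a, ha.1⟩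
  rw [Nat.mul_sub_one] at hlow
  have : n ≤ n * #M := Nat.le_mul_of_pos_right n hM1
  omega

lemma sdiff (hM : IsBallot n G M) (haM : IsGreatest (M : Set α) a) (hSG : S ⊆ G)
    (hS : #S = n) (haS : IsLeast (S : Set α) a)
    (hSinit : ∀ x ∈ S, ∀ y ∈ G \ S, a ≤ y → x < y) :
    IsBallot n (G \ S) (M.erase a) := by
  refine ⟨fun x hx => ?_, fun g hg => ?_⟩
  · rw [mem_erase] at hx
    exact mem_sdiff.2 ⟨hM.1 hx.2, fun hxS => hx.1 (le_antisymm (haM.2 hx.2) (haS.2 hxS))⟩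
  rcases le_or_gt a g with hag | hga
  · have hSg : S ⊆ {x ∈ G | x ≤ g} := fun x hx =>
      mem_filter.2 ⟨hSG hx, (hSinit x hx g hg hag).le⟩
    have haMg : a ∈ {x ∈ M | x ≤ g} := mem_filter.2 ⟨haM.1, hag⟩
    have hGg : {x ∈ G \ S | x ≤ g} = {x ∈ G | x ≤ g} \ S := by
      ext x
      simp only [mem_filter, mem_sdiff]
      tauto
    have := hM.2 g (mem_sdiff.1 hg).1
    rw [hGg, filter_erase, card_sdiff_of_subset hSg, card_erase_of_mem haMg, hS, Nat.mul_sub_one]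
    omega
  · have hGg : {x ∈ G \ S | x ≤ g} = {x ∈ G | x ≤ g} := by
      ext x
      simp only [mem_filter, mem_sdiff]
      exact ⟨fun h => ⟨h.1.1, h.2⟩,
        fun h => ⟨⟨h.1, fun hxS => (haS.2 hxS).not_gt (h.2.trans_lt hga)⟩, h.2⟩⟩
    have hMg : {x ∈ M.erase a | x ≤ g} = {x ∈ M | x ≤ g} := by
      rw [filter_erase]
      exact erase_eq_of_notMem fun ha => (mem_filter.1 ha).2.not_gt hga
    rw [hGg, hMg]
    exact hM.2 g (mem_sdiff.1 hg).1

end IsBallot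

theorem IsBallot.exists_isNoncrossingPartition (hn : 0 < n) (hM : IsBallot n G M)
    (hcard : #G = n * #M) : ∃ P, IsNoncrossingPartition n G P ∧ blockMins P = M := by
  induction G using Finset.strongInduction generalizing M with
  | H G ih =>
  rcases M.eq_empty_or_nonempty with rfl | hMne
  · obtain rfl : G = ∅ := card_eq_zero.1 (by rw [hcard, card_empty, mul_zero])
    exact ⟨∅, isNoncrossingPartition_empty, biUnion_empty⟩
  obtain ⟨a, haM⟩ : ∃ a, IsGreatest (M : Set α) a := ⟨_, isGreatest_max' M hMne⟩
  -- The block with minimum `a` is made of the first `n` points of `G` from `a` on.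
  obtain ⟨S, hSa, hScard, hSinit⟩ :=
    exists_subset_card_eq_forall_lt (hM.le_card_filter_ge haM hcard)
  have hSG : S ⊆ G := fun x hx => (mem_filter.1 (hSa hx)).1
  have hSinit' : ∀ x ∈ S, ∀ y ∈ G \ S, a ≤ y → x < y := fun x hx y hy hay =>
    hSinit x hx y (mem_sdiff.2 ⟨mem_filter.2 ⟨(mem_sdiff.1 hy).1, hay⟩, (mem_sdiff.1 hy).2⟩)
  have haS : IsLeast (S : Set α) a := by
    refine ⟨?_, fun x hx => (mem_filter.1 (hSa hx)).2⟩
    by_contra haS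
    obtain ⟨x, hx⟩ := card_pos.1 (hScard ▸ hn)
    exact (hSinit' x hx a (mem_sdiff.2 ⟨hM.1 haM.1, haS⟩) le_rfl).not_ge
      (mem_filter.1 (hSa hx)).2
  have hSconsec : IsConsecutiveIn S G := fun x hx z hz y hy hxy hyz => by
    by_contra hyS
    exact (hSinit' z hz y (mem_sdiff.2 ⟨hy, hyS⟩) ((haS.2 hx).trans hxy.le)).not_gt hyz
  obtain ⟨P, hP, hPM⟩ := ih (G \ S) (sdiff_ssubset hSG ⟨a, haS.1⟩)
    (hM.sdiff haM hSG hScard haS hSinit')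
    (by rw [card_sdiff_of_subset hSG, hcard, hScard, card_erase_of_mem haM.1, Nat.mul_sub_one])
  exact ⟨insert S P, hP.insert hSG hScard hSconsec,
    by rw [blockMins_insert haS, hPM, insert_erase haM.1]⟩

theorem card_isNoncrossingPartition (hn : 0 < n) {k : ℕ} (hG : #G = n * k) :
    Nat.card {P // IsNoncrossingPartition n G P} =
      Nat.card {M : Finset α // #M = k ∧ IsBallot n G M} := by
  refine Nat.card_eq_of_bijective (fun P => ⟨blockMins P.1, ?_, P.2.isBallot_blockMins hn⟩)
    ⟨?_, ?_⟩
  · rw [P.2.card_blockMins hn]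
    exact Nat.eq_of_mul_eq_mul_left hn (P.2.card.symm.trans hG)
  · rintro ⟨P, hP⟩ ⟨Q, hQ⟩ h
    exact Subtype.ext (hP.eq_of_blockMins_eq hn hQ (congrArg Subtype.val h))
  · rintro ⟨M, hMk, hM⟩
    obtain ⟨P, hP, hPM⟩ := hM.exists_isNoncrossingPartition hn (hMk ▸ hG)
    exact ⟨⟨P, hP⟩, Subtype.ext hPM⟩

end NoncrossingPartition

section CycleLemma

variable {L : ℕ} (f : ℕ → ℤ)

lemma cycle_start_iff (hf : ∀ t, f (t + L) = f t - 1) {c : ℕ} (hc : c < L) :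
    (∀ t, 0 < t → t < L → f c ≤ f (c + t)) ↔
      (∀ s < c, f c < f s) ∧ ∀ s < L, f c ≤ f s := by
  constructor
  · intro h
    have hlt : ∀ s < c, f c < f s := fun s hs => by
      have := h (s + L - c) (by omega) (by omega)
      rw [show c + (s + L - c) = s + L by omega, hf] at this
      omega
    refine ⟨hlt, fun s hs => ?_⟩
    rcases lt_trichotomy s c with hsc | rfl | hcs
    · exact (hlt s hsc).le
    · exact le_rfl
    · simpa [show c + (s - c) = s by omega] using h (s - c) (by omega) (by omega)
  · rintro ⟨hlt, hle⟩ t - ht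
    rcases lt_or_ge (c + t) L with h | h
    · exact hle _ h
    · have := hlt (c + t - L) (by omega)
      rw [show c + t = c + t - L + L by omega, hf]
      omega

/-- Cycle lemma: the unique start is the first point where `f` attains its minimum on
`[0, L)`. -/
lemma existsUnique_cycle_start [NeZero L] (hf : ∀ t, f (t + L) = f t - 1) :
    ∃! c : Fin L, ∀ t, 0 < t → t < L → f c ≤ f (c + t) := by
  have hex : ∃ c, c < L ∧ ∀ s < L, f c ≤ f s := by
    obtain ⟨c, hc, hmin⟩ := exists_min_image (range L) f ⟨0, mem_range.2 (NeZero.pos L)⟩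
    exact ⟨c, mem_range.1 hc, fun s hs => hmin s (mem_range.2 hs)⟩
  classical
  obtain ⟨hc₀L, hc₀⟩ := Nat.find_spec hex
  refine ⟨⟨Nat.find hex, hc₀L⟩,
    (cycle_start_iff f hf hc₀L).2 ⟨fun s hs => ?_, hc₀⟩, ?_⟩
  · obtain ⟨s', hs'L, hs'⟩ :=
      not_forall₂.1 (not_and.1 (Nat.find_min hex hs) (hs.trans hc₀L))
    exact (hc₀ s' hs'L).trans_lt (not_le.1 hs')
  · intro c hc
    obtain ⟨hlt, hle⟩ := (cycle_start_iff f hf c.isLt).1 hc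
    refine Fin.ext (le_antisymm ?_ (Nat.find_min' hex ⟨c.isLt, hle⟩))
    by_contra! h
    exact (hlt _ h).not_ge (hc₀ c c.isLt)

end CycleLemma

section Rotation

open Fin.NatCast Pointwise

variable {m n : ℕ}

def IsDominating (n m : ℕ) {k : ℕ} (B : Finset (Fin k)) : Prop :=
  ∀ t ≤ m, t ≤ n * #{x ∈ B | x.val < t}

def prefixCount (B : Finset (Fin (m + 1))) (t : ℕ) : ℕ :=
  #((range t).filter fun j : ℕ => (j : Fin (m + 1)) ∈ B)

lemma prefixCount_add (B : Finset (Fin (m + 1))) (a b : ℕ) :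
    prefixCount B (a + b) = prefixCount B a + prefixCount (-(a : Fin (m + 1)) +ᵥ B) b := by
  simp only [prefixCount, card_filter, sum_range_add, mem_neg_vadd_finset_iff, vadd_eq_add,
    Nat.cast_add]

lemma prefixCount_eq_card_filter (B : Finset (Fin (m + 1))) {t : ℕ} (ht : t ≤ m + 1) :
    prefixCount B t = #{x ∈ B | x.val < t} := by
  refine card_nbij' (fun j => (j : Fin (m + 1))) Fin.val ?_ ?_ ?_ ?_
  · intro j hj
    have hj := mem_filter.1 hj
    have hjm : j < m + 1 := (mem_range.1 hj.1).trans_le ht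
    exact mem_filter.2 ⟨hj.2, by rw [Fin.val_cast_of_lt hjm]; exact mem_range.1 hj.1⟩
  · intro x hx
    have hx := mem_filter.1 hx
    exact mem_filter.2 ⟨mem_range.2 hx.2, by rw [Fin.cast_val_eq_self]; exact hx.1⟩
  · intro j hj
    exact Fin.val_cast_of_lt ((mem_range.1 (mem_filter.1 hj).1).trans_le ht)
  · intro x _
    exact Fin.cast_val_eq_self x

lemma prefixCount_add_period (B : Finset (Fin (m + 1))) (t : ℕ) :
    prefixCount B (t + (m + 1)) = prefixCount B t + #B := by
  rw [prefixCount_add, prefixCount_eq_card_filter _ le_rfl,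
    filter_true_of_mem fun x _ => x.isLt, card_vadd_finset]

lemma isDominating_neg_vadd_iff (B : Finset (Fin (m + 1))) (c : Fin (m + 1)) :
    IsDominating n m (-c +ᵥ B) ↔ ∀ t, 0 < t → t < m + 1 →
      (n * prefixCount B c - c : ℤ) ≤ n * prefixCount B (c + t) - (c + t : ℕ) := by
  have hsplit (t : ℕ) (ht : t ≤ m + 1) :
      prefixCount B (c + t) = prefixCount B c + #{x ∈ -c +ᵥ B | x.val < t} := by
    rw [prefixCount_add, Fin.cast_val_eq_self, prefixCount_eq_card_filter _ ht]
  constructor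
  · intro hD t _ ht
    have : (t : ℤ) ≤ n * #{x ∈ -c +ᵥ B | x.val < t} := by exact_mod_cast hD t (by omega)
    rw [hsplit t ht.le]
    push_cast
    linarith
  · intro hf t ht
    rcases t.eq_zero_or_pos with rfl | ht0
    · exact Nat.zero_le _
    have := hf t ht0 (by omega)
    rw [hsplit t (by omega)] at this
    push_cast at this
    exact_mod_cast (by linarith : (t : ℤ) ≤ n * #{x ∈ -c +ᵥ B | x.val < t})

lemma existsUnique_isDominating_neg_vadd (B : Finset (Fin (m + 1))) (hB : n * #B = m) :
    ∃! c : Fin (m + 1), IsDominating n m (-c +ᵥ B) := by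
  simp only [isDominating_neg_vadd_iff]
  refine existsUnique_cycle_start (fun t => (n * prefixCount B t - t : ℤ)) fun t => ?_
  have hB' : (n * #B : ℤ) = m := by exact_mod_cast hB
  simp only [prefixCount_add_period]
  push_cast
  linear_combination hB'

theorem card_mul_card_isDominating {i : ℕ} (hm : n * i = m) :
    (m + 1) * Nat.card {B : Finset (Fin (m + 1)) // #B = i ∧ IsDominating n m B} =
      (m + 1).choose i := by
  have hbij : Function.Bijective
      fun p : Fin (m + 1) × {B : Finset (Fin (m + 1)) // #B = i ∧ IsDominating n m B} =>
        (⟨p.1 +ᵥ p.2.1, (card_vadd_finset _ _).trans p.2.2.1⟩ :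
          {B : Finset (Fin (m + 1)) // #B = i}) := by
    refine ⟨?_, fun X => ?_⟩
    · rintro ⟨c, B, hB, hBdom⟩ ⟨c', B', hB', hB'dom⟩ h
      have h : c +ᵥ B = c' +ᵥ B' := congrArg Subtype.val h
      have hc : c = c' := by
        refine (existsUnique_isDominating_neg_vadd (c +ᵥ B)
          (by rw [card_vadd_finset, hB, hm])).unique ?_ ?_
        · rwa [neg_vadd_vadd]
        · rwa [h, neg_vadd_vadd]
      subst hc
      simp only [Prod.mk.injEq, true_and]
      exact Subtype.ext (show B = B' by rw [← neg_vadd_vadd c B, h, neg_vadd_vadd])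
    · obtain ⟨c, hc, -⟩ := existsUnique_isDominating_neg_vadd X.1 (by rw [X.2, hm])
      exact ⟨⟨c, -c +ᵥ X.1, (card_vadd_finset _ _).trans X.2, hc⟩,
        Subtype.ext (vadd_neg_vadd c X.1)⟩
  calc (m + 1) * Nat.card {B : Finset (Fin (m + 1)) // #B = i ∧ IsDominating n m B}
      = Nat.card (Fin (m + 1) × {B : Finset (Fin (m + 1)) // #B = i ∧ IsDominating n m B}) := by
        rw [Nat.card_prod, Nat.card_eq_fintype_card (α := Fin (m + 1)), Fintype.card_fin]
    _ = Nat.card {B : Finset (Fin (m + 1)) // #B = i} := Nat.card_eq_of_bijective _ hbij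
    _ = (m + 1).choose i := by
        rw [Nat.card_eq_fintype_card, Fintype.card_finset_len, Fintype.card_fin]

end Rotation

section Circle

variable {m : ℕ}

instance (p t q : Fin m) : Decidable (CycBtw p t q) := inferInstanceAs (Decidable (_ ∧ _))

lemma arcPos_eq (a x : Fin m) :
    arcPos a x = if a.val ≤ x.val then x.val - a.val else x.val + m - a.val := by
  have := a.isLt
  have := x.isLt
  unfold arcPos
  split_ifs
  · rw [show x.val + m - a.val = x.val - a.val + m by omega, Nat.add_mod_right,
      Nat.mod_eq_of_lt (by omega)]
  · exact Nat.mod_eq_of_lt (by omega)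

lemma arcPos_lt (a x : Fin m) : arcPos a x < m := Nat.mod_lt _ a.pos

lemma arcPos_pos_iff {a x : Fin m} : 0 < arcPos a x ↔ a ≠ x := by
  rw [arcPos_eq, Ne, Fin.ext_iff]
  have := a.isLt
  have := x.isLt
  split_ifs <;> omega

lemma val_add_arcPos_mod (a x : Fin m) : (a.val + arcPos a x) % m = x.val := by
  have := a.isLt
  have := x.isLt
  rw [arcPos_eq]
  split_ifs
  · rw [Nat.mod_eq_of_lt (by omega)]
    omega
  · rw [show a.val + (x.val + m - a.val) = x.val + m by omega, Nat.add_mod_right,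
      Nat.mod_eq_of_lt x.isLt]

lemma arcPos_add_mod (a : Fin m) {j : ℕ} (hj : j < m) :
    arcPos a ⟨(a.val + j) % m, Nat.mod_lt _ a.pos⟩ = j := by
  have := a.isLt
  rcases lt_or_ge (a.val + j) m with h | h
  · rw [arcPos_eq]
    simp only [Nat.mod_eq_of_lt h]
    split_ifs <;> omega
  · rw [arcPos_eq]
    simp only [Nat.mod_eq_sub_mod h, Nat.mod_eq_of_lt (show a.val + j - m < m by omega)]
    split_ifs <;> omega

lemma cycBtw_iff {p t q : Fin m} :
    CycBtw p t q ↔ p < t ∧ t < q ∨ t < q ∧ q < p ∨ q < p ∧ p < t := by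
  simp only [CycBtw, arcPos_eq, Fin.lt_def]
  have := p.isLt
  have := t.isLt
  have := q.isLt
  split_ifs <;> omega

lemma cycBtw_or_cycBtw {p q s : Fin m} (hpq : p ≠ q) (hsp : s ≠ p) (hsq : s ≠ q) :
    CycBtw p s q ∨ CycBtw q s p := by
  rw [Ne, Fin.ext_iff] at hpq hsp hsq
  simp only [cycBtw_iff, Fin.lt_def]
  omega

lemma card_cycBtw {p q : Fin m} : #{t | CycBtw p t q} = arcPos p q - 1 := by
  rw [show arcPos p q - 1 = #(Ioo 0 (arcPos p q)) by simp]
  refine card_nbij' (arcPos p) (fun j => ⟨(p.val + j) % m, Nat.mod_lt _ p.pos⟩) ?_ ?_ ?_ ?_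
  · intro t ht
    exact mem_Ioo.2 (mem_filter.1 ht).2
  · intro j hj
    have hj := mem_Ioo.1 hj
    refine mem_filter.2 ⟨mem_univ _, ?_⟩
    show 0 < _ ∧ _ < _
    rwa [arcPos_add_mod p (hj.2.trans (arcPos_lt p q))]
  · intro t _
    exact Fin.ext (val_add_arcPos_mod p t)
  · intro j hj
    exact arcPos_add_mod p ((mem_Ioo.1 hj).2.trans (arcPos_lt p q))

lemma crosses_iff_interleaves {S T : Finset (Fin m)} :
    Crosses S T ↔ Interleaves S T ∨ Interleaves T S := by
  constructor
  · rintro ⟨p, hp, q, hq, r, hr, s, hs, hr', hs'⟩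
    rw [cycBtw_iff] at hr' hs'
    rcases hr' with ⟨h₁, h₂⟩ | ⟨h₁, h₂⟩ | ⟨h₁, h₂⟩ <;>
      rcases hs' with ⟨h₃, h₄⟩ | ⟨h₃, h₄⟩ | ⟨h₃, h₄⟩
    all_goals first
      | (exfalso; order)
      | (refine Or.inl ⟨p, hp, r, hr, q, hq, s, hs, ?_, ?_, ?_⟩ <;> order)
      | (refine Or.inl ⟨q, hq, s, hs, p, hp, r, hr, ?_, ?_, ?_⟩ <;> order)
      | (refine Or.inr ⟨r, hr, q, hq, s, hs, p, hp, ?_, ?_, ?_⟩ <;> order)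
      | (refine Or.inr ⟨s, hs, p, hp, r, hr, q, hq, ?_, ?_, ?_⟩ <;> order)
  · rintro (⟨p, hp, r, hr, q, hq, s, hs, h₁, h₂, h₃⟩ |
      ⟨r, hr, p, hp, s, hs, q, hq, h₁, h₂, h₃⟩)
    · exact ⟨p, hp, q, hq, r, hr, s, hs, cycBtw_iff.2 (.inl ⟨h₁, h₂⟩),
        cycBtw_iff.2 (.inr (.inr ⟨by order, h₃⟩))⟩
    · exact ⟨p, hp, q, hq, s, hs, r, hr, cycBtw_iff.2 (.inl ⟨h₂, h₃⟩),
        cycBtw_iff.2 (.inr (.inl ⟨h₁, by order⟩))⟩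

end Circle

section Portrait

variable {D n : ℕ} {PP : Finset (Finset (Fin (D * n)))}

lemma label_eq_add_arcPos (p q : Fin (D * n)) : label n q = label n p + arcPos p q := by
  rw [label, label, ← Nat.cast_add, ZMod.natCast_eq_natCast_iff', ← val_add_arcPos_mod p q,
    Nat.mod_mod_of_dvd _ (dvd_mul_left n D)]

namespace IsNoncrossingPartition

lemma forall_cycBtw_of_isNext (hP : IsNoncrossingPartition n univ PP)
    {S T : Finset (Fin (D * n))} (hS : S ∈ PP) (hT : T ∈ PP) {p q t : Fin (D * n)}
    (hpq : IsNext S p q) (ht : t ∈ T) (htpq : CycBtw p t q) : ∀ s ∈ T, CycBtw p s q := by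
  obtain ⟨hp, hq, hpq, hempty⟩ := hpq
  have hTS : T ≠ S := by
    rintro rfl
    exact hempty t ht htpq
  have hdisj := hP.pairwiseDisjoint hS hT hTS.symm
  intro s hs
  by_contra hspq
  have hsp : s ≠ p := fun h => disjoint_left.1 hdisj hp (h ▸ hs)
  have hsq : s ≠ q := fun h => disjoint_left.1 hdisj hq (h ▸ hs)
  have hcross : Crosses S T :=
    ⟨p, hp, q, hq, t, ht, s, hs, htpq, (cycBtw_or_cycBtw hpq hsp hsq).resolve_left hspq⟩
  rcases crosses_iff_interleaves.1 hcross with h | h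
  exacts [hP.noncrossing hS hT hTS.symm h, hP.noncrossing hT hS hTS h]

lemma label_eq_of_isNext (hP : IsNoncrossingPartition n univ PP) {S : Finset (Fin (D * n))}
    (hS : S ∈ PP) {p q : Fin (D * n)} (hpq : IsNext S p q) : label n q = label n p + 1 := by
  have hdvd : n ∣ #{t | CycBtw p t q} := hP.dvd_card (subset_univ _) fun T hT t ht htA x hx =>
    mem_filter.2 ⟨mem_univ x, hP.forall_cycBtw_of_isNext hS hT hpq ht (mem_filter.1 htA).2 x hx⟩
  rw [card_cycBtw] at hdvd
  obtain ⟨k, hk⟩ := hdvd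
  have hpos := arcPos_pos_iff.2 hpq.2.2.1
  rw [label_eq_add_arcPos p q, show arcPos p q = n * k + 1 by omega]
  simp

end IsNoncrossingPartition

theorem isPortrait_iff (hn : 2 ≤ n) :
    (IsPortrait D n PP ∧ ∀ S ∈ PP, #S = n) ↔ IsNoncrossingPartition n univ PP := by
  constructor
  · rintro ⟨⟨-, hdisj, hcover⟩, hcard⟩
    refine ⟨hcard, fun S hS T hT hST => (hdisj S hS T hT hST).1,
      fun S hS T hT hST h => (hdisj S hS T hT hST).2 (crosses_iff_interleaves.2 (.inl h)), ?_⟩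
    exact eq_univ_of_forall fun p => mem_biUnion.2 (hcover p)
  · intro hP
    refine ⟨⟨fun S hS => ⟨?_, ?_, fun p q => hP.label_eq_of_isNext hS⟩,
      fun S hS T hT hST => ⟨hP.pairwiseDisjoint hS hT hST, ?_⟩,
      fun p => hP.mem_iff.1 (mem_univ p)⟩, hP.card_eq⟩
    · exact (hP.card_eq S hS).symm ▸ hn
    · exact (hP.card_eq S hS).symm ▸ dvd_rfl
    · rw [crosses_iff_interleaves]
      rintro (h | h)
      exacts [hP.noncrossing hS hT hST h, hP.noncrossing hT hS hST.symm h]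

end Portrait

section Counting

variable {n : ℕ}

lemma isBallot_univ_iff {k : ℕ} (M : Finset (Fin k)) :
    IsBallot n univ M ↔ IsDominating n k M := by
  have hG (g : Fin k) : #{x ∈ univ | x ≤ g} = g.val + 1 := by
    rw [filter_ge_eq_Iic, Fin.card_Iic]
  have hM (g : Fin k) : {x ∈ M | x ≤ g} = {x ∈ M | x.val < g.val + 1} :=
    filter_congr fun x _ => by rw [Fin.le_iff_val_le_val, Nat.lt_succ_iff]
  simp only [IsBallot, subset_univ, mem_univ, true_and, forall_const, hG, hM, IsDominating]
  constructor
  · intro h t ht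
    rcases t.eq_zero_or_pos with rfl | ht0
    · exact Nat.zero_le _
    simpa [Nat.sub_add_cancel ht0] using h ⟨t - 1, by omega⟩
  · exact fun h g => h _ g.isLt

lemma isDominating_map_castSucc {m k : ℕ} (M : Finset (Fin k)) :
    IsDominating n m (M.map Fin.castSuccEmb) ↔ IsDominating n m M := by
  simp only [IsDominating, filter_map, card_map]
  rfl

lemma card_isDominating_castSucc {i k : ℕ} (hn : 0 < n) (hk : k = n * i) :
    Nat.card {M : Finset (Fin k) // #M = i ∧ IsDominating n k M} =
      Nat.card {B : Finset (Fin (k + 1)) // #B = i ∧ IsDominating n k B} := by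
  refine Nat.card_eq_of_bijective (fun M => ⟨M.1.map Fin.castSuccEmb, by rw [card_map, M.2.1],
    (isDominating_map_castSucc M.1).2 M.2.2⟩) ⟨fun M M' h => ?_, fun B => ?_⟩
  · exact Subtype.ext (map_injective _ (congrArg Subtype.val h))
  obtain ⟨B, hBi, hB⟩ := B
  have hlt : {x ∈ B | x.val < k} = B := by
    refine eq_of_subset_of_card_le (filter_subset _ _) ?_
    exact Nat.le_of_mul_le_mul_left (by rw [hBi, ← hk]; exact hB k le_rfl) hn
  have hBsub : B ⊆ univ.map Fin.castSuccEmb := fun x hx => by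
    have hx : x.val < k := (mem_filter.1 (by rwa [hlt] : x ∈ {x ∈ B | x.val < k})).2
    exact mem_map.2 ⟨⟨x.val, hx⟩, mem_univ _, rfl⟩
  obtain ⟨M, -, rfl⟩ := subset_map_iff.1 hBsub
  exact ⟨⟨M, by rwa [card_map] at hBi, (isDominating_map_castSucc M).1 hB⟩, rfl⟩

lemma eq_fussCatalan_of_mul_eq_choose {m i D : ℕ} (hn : 0 < n) (hm : m = n * i)
    (h : (m + 1) * D = (m + 1).choose i) : D = (n * i).choose i / ((n - 1) * i + 1) := by
  subst hm
  have hsub : (n - 1) * i + 1 = n * i + 1 - i := by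
    rw [Nat.sub_one_mul]
    have : i ≤ n * i := Nat.le_mul_of_pos_left i hn
    omega
  have hD : D * ((n - 1) * i + 1) = (n * i).choose i := by
    refine Nat.eq_of_mul_eq_mul_left (Nat.succ_pos (n * i)) ?_
    rw [← mul_assoc, h, hsub, ← Nat.choose_mul_succ_eq, mul_comm]
  rw [← hD, Nat.mul_div_cancel _ (Nat.succ_pos _)]

end Counting

theorem card_one_to_one_portraits_general (i n : ℕ) (hn : 2 ≤ n) :
    Nat.card {PP : Finset (Finset (Fin (i * n))) //
        IsPortrait i n PP ∧ ∀ S ∈ PP, S.card = n} =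
      (n * i).choose i / ((n - 1) * i + 1) := by
  have hn0 : 0 < n := by omega
  have hin : i * n = n * i := mul_comm i n
  refine eq_fussCatalan_of_mul_eq_choose hn0 hin ?_
  calc (i * n + 1) * Nat.card {PP // IsPortrait i n PP ∧ ∀ S ∈ PP, S.card = n}
      = (i * n + 1) * Nat.card {P // IsNoncrossingPartition n univ P} := by
        rw [Nat.card_congr (Equiv.subtypeEquivRight fun _ => isPortrait_iff hn)]
    _ = (i * n + 1) *
          Nat.card {M : Finset (Fin (i * n)) // #M = i ∧ IsDominating n (i * n) M} := by
        rw [card_isNoncrossingPartition hn0 (by rw [card_univ, Fintype.card_fin, hin])]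
        simp only [isBallot_univ_iff]
    _ = (i * n + 1) *
          Nat.card {B : Finset (Fin (i * n + 1)) // #B = i ∧ IsDominating n (i * n) B} := by
        rw [card_isDominating_castSucc hn0 hin]
    _ = (i * n + 1).choose i := card_mul_card_isDominating hin.symm

/-- The number of sibling portraits of an `n`-gon inside a round gap
of degree `i` in which every polygon maps one-to-one (each polygon is an `n`-gon)
equals the Fuss–Catalan number `(n*i).choose i / ((n-1)*i + 1)`. -/
theorem card_one_to_one_portraits (i n : ℕ) (hi : 1 ≤ i) (hn : 2 ≤ n) :
    Nat.card {PP : Finset (Finset (Fin (i * n))) //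
        IsPortrait i n PP ∧ ∀ S ∈ PP, S.card = n} =
      (n * i).choose i / ((n - 1) * i + 1) :=
  card_one_to_one_portraits_general i n hn
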